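/- Let V be a compact Hausdorff space with a finite Borel measure ω positive on open sets, and P an ω-partition of V. If Z ∈ C*(V) is a copositive kernel, then its averaging Z⋄P is copositive on V, and moreover, viewed as a finite matrix indexed by P × P (with the counting measure on P), Z⋄P is a copositive matrix: Σ_{X,Y ∈ P} (Z⋄P)(X,Y) φ(X)φ(Y) ≥ 0 for all nonnegative φ : P → ℝ. -/

import Mathlib

open MeasureTheory

/-- An `ω`-partition: a finite partition of `V` into measurable sets of positive measure. -/
def IsOmegaPartition {V : Type*} [MeasurableSpace V] (ω : Measure V)
    (P : Finset (Set V)) : Prop :=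
  (∀ X ∈ P, MeasurableSet X) ∧ (∀ X ∈ P, 0 < ω X) ∧
    (∀ X ∈ P, ∀ Y ∈ P, X ≠ Y → Disjoint X Y) ∧ (⋃ X ∈ P, X) = Set.univ

/-- The averaging `Z ⋄ P` of a kernel over an `ω`-partition, as a kernel on `V × V`. -/
noncomputable def avgKernel {V : Type*} [MeasurableSpace V] (ω : Measure V)
    (P : Finset (Set V)) (Z : V × V → ℝ) : V × V → ℝ := fun p =>
  ∑ X ∈ P, ∑ Y ∈ P,
    Set.indicator X (fun _ => (1 : ℝ)) p.1 * Set.indicator Y (fun _ => (1 : ℝ)) p.2 *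
      ((ω X).toReal⁻¹ * (ω Y).toReal⁻¹ * ∫ x in X, ∫ y in Y, Z (x, y) ∂ω ∂ω)

/-- The entry `(Z ⋄ P)(X, Y)` of the averaged kernel, viewed as a matrix on `P × P`. -/
noncomputable def avgEntry {V : Type*} [MeasurableSpace V] (ω : Measure V)
    (Z : V × V → ℝ) (X Y : Set V) : ℝ :=
  (ω X).toReal⁻¹ * (ω Y).toReal⁻¹ * ∫ x in X, ∫ y in Y, Z (x, y) ∂ω ∂ω

/-- `Z` belongs to the copositive cone `C*(V)`. -/
def IsCopositiveKernel {V : Type*} [MeasurableSpace V] (ω : Measure V)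
    (Z : V × V → ℝ) : Prop :=
  (∀ x y : V, Z (x, y) = Z (y, x)) ∧ MemLp Z 2 (ω.prod ω) ∧
    ∀ f : V → ℝ, 0 ≤ᵐ[ω] f → MemLp f 2 ω →
      0 ≤ ∫ p : V × V, Z p * (f p.1 * f p.2) ∂(ω.prod ω)

/-!
Testing `Z` against the nonnegative step function equal to `φ X / ω(X)` on each block `X` of `P`
gives exactly `∑ X Y, (Z ⋄ P)(X, Y) φ(X) φ(Y)`, so the matrix `Z ⋄ P` is copositive. Testing the
kernel `Z ⋄ P` against `f ≥ 0` gives the same quadratic form at `φ(X) = ∫_X f ≥ 0`, so the kernel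
is copositive as well; its symmetry is Fubini applied to the symmetric `Z`.
-/

open Finset

section IndicatorProduct

variable {α β : Type*}

lemma indicator_one_mul_apply (X : Set α) (f : α → ℝ) (a : α) :
    X.indicator (fun _ => (1 : ℝ)) a * f a = X.indicator f a := by
  simpa using (Set.indicator_mul_left X (fun _ => (1 : ℝ)) f).symm

lemma indicator_one_mul_indicator_one_mul (X : Set α) (Y : Set β) (g : α × β → ℝ)
    (p : α × β) :
    X.indicator (fun _ => (1 : ℝ)) p.1 * Y.indicator (fun _ => (1 : ℝ)) p.2 * g p =
      (X ×ˢ Y).indicator g p := by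
  by_cases hX : p.1 ∈ X <;> by_cases hY : p.2 ∈ Y <;> simp [hX, hY, Set.mem_prod]

variable [MeasurableSpace α] [MeasurableSpace β] {μ : Measure α} {ν : Measure β} [SFinite μ]
  [SFinite ν]

lemma integral_indicator_one_mul_indicator_one_mul {g : α × β → ℝ} (hg : Integrable g (μ.prod ν))
    {X : Set α} {Y : Set β} (hX : MeasurableSet X) (hY : MeasurableSet Y) :
    ∫ p, X.indicator (fun _ => (1 : ℝ)) p.1 * Y.indicator (fun _ => (1 : ℝ)) p.2 * g p
        ∂(μ.prod ν) = ∫ x in X, ∫ y in Y, g (x, y) ∂ν ∂μ := by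
  simp_rw [indicator_one_mul_indicator_one_mul]
  rw [integral_indicator (hX.prod hY), setIntegral_prod _ hg.integrableOn]

lemma setIntegral_setIntegral_swap {g : α × β → ℝ} (hg : Integrable g (μ.prod ν))
    (X : Set α) (Y : Set β) :
    ∫ x in X, ∫ y in Y, g (x, y) ∂ν ∂μ = ∫ y in Y, ∫ x in X, g (x, y) ∂μ ∂ν :=
  integral_integral_swap (by rw [Measure.prod_restrict]; exact hg.integrableOn)

end IndicatorProduct

section Averaging

variable {V : Type*} [MeasurableSpace V] {ω : Measure V} {P : Finset (Set V)} {Z : V × V → ℝ}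

lemma avgKernel_apply (p : V × V) :
    avgKernel ω P Z p = ∑ X ∈ P, ∑ Y ∈ P,
      X.indicator (fun _ => (1 : ℝ)) p.1 * Y.indicator (fun _ => (1 : ℝ)) p.2 *
        avgEntry ω Z X Y :=
  rfl

lemma avgEntry_comm [SFinite ω] (hsymm : ∀ x y, Z (x, y) = Z (y, x))
    (hZ : Integrable Z (ω.prod ω)) (X Y : Set V) :
    avgEntry ω Z X Y = avgEntry ω Z Y X := by
  simp only [avgEntry, setIntegral_setIntegral_swap hZ X Y, hsymm]
  ring

lemma avgKernel_comm [SFinite ω] (hsymm : ∀ x y, Z (x, y) = Z (y, x))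
    (hZ : Integrable Z (ω.prod ω)) (x y : V) :
    avgKernel ω P Z (x, y) = avgKernel ω P Z (y, x) := by
  simp only [avgKernel_apply]
  rw [sum_comm]
  refine sum_congr rfl fun X _ => sum_congr rfl fun Y _ => ?_
  rw [avgEntry_comm hsymm hZ X Y]
  ring

lemma memLp_avgKernel [IsFiniteMeasure ω] (hP : ∀ X ∈ P, MeasurableSet X) :
    MemLp (avgKernel ω P Z) 2 (ω.prod ω) := by
  refine memLp_finsetSum P fun X hX => memLp_finsetSum P fun Y hY => ?_
  have := memLp_indicator_const 2 ((hP X hX).prod (hP Y hY)) (avgEntry ω Z X Y)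
    (Or.inr (measure_ne_top (ω.prod ω) _))
  rwa [← funext (indicator_one_mul_indicator_one_mul X Y _)] at this

lemma integral_mul_stepFunction [SFinite ω] (hP : ∀ X ∈ P, MeasurableSet X)
    (hZ : Integrable Z (ω.prod ω)) (c : Set V → ℝ) :
    ∫ p, Z p * ((∑ X ∈ P, c X * X.indicator (fun _ => (1 : ℝ)) p.1) *
        (∑ Y ∈ P, c Y * Y.indicator (fun _ => (1 : ℝ)) p.2)) ∂(ω.prod ω) =
      ∑ X ∈ P, ∑ Y ∈ P, c X * c Y * ∫ x in X, ∫ y in Y, Z (x, y) ∂ω ∂ω := by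
  have hterm : ∀ X ∈ P, ∀ Y ∈ P, Integrable (fun p => c X * c Y *
      (X.indicator (fun _ => (1 : ℝ)) p.1 * Y.indicator (fun _ => (1 : ℝ)) p.2 * Z p))
      (ω.prod ω) := fun X hX Y hY => by
    simp_rw [indicator_one_mul_indicator_one_mul]
    exact (hZ.indicator ((hP X hX).prod (hP Y hY))).const_mul _
  calc _ = ∫ p, ∑ X ∈ P, ∑ Y ∈ P, c X * c Y *
        (X.indicator (fun _ => (1 : ℝ)) p.1 * Y.indicator (fun _ => (1 : ℝ)) p.2 * Z p)
        ∂(ω.prod ω) := by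
        congr 1 with p
        rw [sum_mul_sum]
        simp only [mul_sum]
        exact sum_congr rfl fun X _ => sum_congr rfl fun Y _ => by ring
    _ = _ := by
        rw [integral_finsetSum _ fun X hX => integrable_finsetSum _ (hterm X hX)]
        refine sum_congr rfl fun X hX => ?_
        rw [integral_finsetSum _ (hterm X hX)]
        refine sum_congr rfl fun Y hY => ?_
        rw [integral_const_mul,
          integral_indicator_one_mul_indicator_one_mul hZ (hP X hX) (hP Y hY)]

lemma sum_avgEntry_mul_nonneg [IsFiniteMeasure ω] (hP : ∀ X ∈ P, MeasurableSet X)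
    (hZ : IsCopositiveKernel ω Z) {φ : Set V → ℝ} (hφ : ∀ X ∈ P, 0 ≤ φ X) :
    0 ≤ ∑ X ∈ P, ∑ Y ∈ P, avgEntry ω Z X Y * (φ X * φ Y) := by
  set c : Set V → ℝ := fun X => φ X * (ω X).toReal⁻¹
  set f : V → ℝ := fun v => ∑ X ∈ P, c X * X.indicator (fun _ => (1 : ℝ)) v
  have hf_nonneg : 0 ≤ᵐ[ω] f := ae_of_all _ fun v => sum_nonneg fun X hX =>
    mul_nonneg (mul_nonneg (hφ X hX) (inv_nonneg.2 ENNReal.toReal_nonneg))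
      (Set.indicator_nonneg (fun _ _ => zero_le_one) v)
  have hf : MemLp f 2 ω := memLp_finsetSum P fun X hX =>
    (memLp_indicator_const 2 (hP X hX) 1 (Or.inr (measure_ne_top ω X))).const_mul (c X)
  have hZf := hZ.2.2 f hf_nonneg hf
  rw [integral_mul_stepFunction hP (hZ.2.1.integrable one_le_two) c] at hZf
  refine hZf.trans_eq (sum_congr rfl fun X _ => sum_congr rfl fun Y _ => ?_)
  simp only [c, avgEntry]
  ring

lemma integral_avgKernel_mul [SFinite ω] (hP : ∀ X ∈ P, MeasurableSet X) {f : V → ℝ}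
    (hf : Integrable f ω) :
    ∫ p, avgKernel ω P Z p * (f p.1 * f p.2) ∂(ω.prod ω) =
      ∑ X ∈ P, ∑ Y ∈ P, avgEntry ω Z X Y * ((∫ x in X, f x ∂ω) * ∫ y in Y, f y ∂ω) := by
  have hterm : ∀ X ∈ P, ∀ Y ∈ P, Integrable (fun p : V × V =>
      avgEntry ω Z X Y * (X.indicator f p.1 * Y.indicator f p.2)) (ω.prod ω) :=
    fun X hX Y hY => ((hf.indicator (hP X hX)).mul_prod (hf.indicator (hP Y hY))).const_mul _
  calc _ = ∫ p, ∑ X ∈ P, ∑ Y ∈ P,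
        avgEntry ω Z X Y * (X.indicator f p.1 * Y.indicator f p.2) ∂(ω.prod ω) := by
        congr 1 with p
        rw [avgKernel_apply, sum_mul]
        refine sum_congr rfl fun X _ => ?_
        rw [sum_mul]
        refine sum_congr rfl fun Y _ => ?_
        rw [← indicator_one_mul_apply X f, ← indicator_one_mul_apply Y f]
        ring
    _ = _ := by
        rw [integral_finsetSum _ fun X hX => integrable_finsetSum _ (hterm X hX)]
        refine sum_congr rfl fun X hX => ?_
        rw [integral_finsetSum _ (hterm X hX)]
        refine sum_congr rfl fun Y hY => ?_
        rw [integral_const_mul, integral_prod_mul, integral_indicator (hP X hX),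
          integral_indicator (hP Y hY)]

lemma isCopositiveKernel_avgKernel [IsFiniteMeasure ω] (hP : ∀ X ∈ P, MeasurableSet X)
    (hZ : IsCopositiveKernel ω Z) : IsCopositiveKernel ω (avgKernel ω P Z) := by
  refine ⟨avgKernel_comm hZ.1 (hZ.2.1.integrable one_le_two), memLp_avgKernel hP,
    fun f hf_nonneg hf => ?_⟩
  rw [integral_avgKernel_mul hP (hf.integrable one_le_two)]
  exact sum_avgEntry_mul_nonneg hP hZ fun X hX =>
    setIntegral_nonneg_ae (hP X hX) (hf_nonneg.mono fun _ hv _ => hv)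

end Averaging

theorem stmt_10_general {V : Type*} [MeasurableSpace V]
    (ω : Measure V) [IsFiniteMeasure ω]
    (P : Finset (Set V)) (hP : IsOmegaPartition ω P)
    (Z : V × V → ℝ) (hZ : IsCopositiveKernel ω Z) :
    IsCopositiveKernel ω (avgKernel ω P Z) ∧
      ∀ φ : Set V → ℝ, (∀ X ∈ P, 0 ≤ φ X) →
        0 ≤ ∑ X ∈ P, ∑ Y ∈ P, avgEntry ω Z X Y * (φ X * φ Y) :=
  ⟨isCopositiveKernel_avgKernel hP.1 hZ, fun _ hφ => sum_avgEntry_mul_nonneg hP.1 hZ hφ⟩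

/-- if `Z ∈ C*(V)`, then `Z⋄P` is copositive on `V` and, viewed as a
finite matrix indexed by `P × P`, is a copositive matrix. -/
theorem stmt_10 {V : Type*} [TopologicalSpace V] [CompactSpace V] [T2Space V]
    [MeasurableSpace V] [BorelSpace V]
    (ω : Measure V) [IsFiniteMeasure ω]
    (hpos : ∀ U : Set V, IsOpen U → U.Nonempty → 0 < ω U)
    (P : Finset (Set V)) (hP : IsOmegaPartition ω P)
    (Z : V × V → ℝ) (hZ : IsCopositiveKernel ω Z) :
    IsCopositiveKernel ω (avgKernel ω P Z) ∧
      ∀ φ : Set V → ℝ, (∀ X ∈ P, 0 ≤ φ X) →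
        0 ≤ ∑ X ∈ P, ∑ Y ∈ P, avgEntry ω Z X Y * (φ X * φ Y) :=
  stmt_10_general ω P hP Z hZ
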